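/- arXiv:2311.13459 — 2 statements merged into one kernel-verified Lean document; each statement's English description precedes it below -/
import Mathlib

section
/- For t ≥ 1 (t < 2), the t-Hilbert co-simplex distance ρ(p, q) = log_t( (max_i p_i/q_i) / (min_i p_i/q_i) ) on vectors p, q with strictly positive entries satisfies the triangle inequality ρ(p, r) ≤ ρ(p, q) + ρ(q, r). -/
noncomputable def tlog (t x : ℝ) : ℝ :=
  if t = 1 then Real.log x else (x ^ (1 - t) - 1) / (1 - t)

noncomputable def tHilbert {ι : Type*} [Fintype ι] [Nonempty ι] (t : ℝ) (p q : ι → ℝ) : ℝ :=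
  tlog t ((Finset.univ.sup' Finset.univ_nonempty fun i => p i / q i) /
          (Finset.univ.inf' Finset.univ_nonempty fun i => p i / q i))

/-!
Writing `M` and `m` for the largest and smallest coordinate ratio, the ratios of `p / r`
are the products of those of `p / q` and `q / r`, so
`M(p,r)/m(p,r) ≤ (M(p,q)/m(p,q)) (M(q,r)/m(q,r))`.
Since `log_t` is increasing, it remains to see that `log_t (a b) ≤ log_t a + log_t b` for
`a, b ≥ 1` and `t ≥ 1`; with `u = a^(1-t)` and `v = b^(1-t)` in `(0, 1]` this is
`(1 - u)(1 - v) ≥ 0`.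
-/

open Finset

lemma tlog_le_tlog (t : ℝ) {x y : ℝ} (hx : 0 < x) (hxy : x ≤ y) : tlog t x ≤ tlog t y := by
  unfold tlog
  split_ifs with ht
  · exact Real.log_le_log hx hxy
  rcases lt_or_gt_of_ne ht with ht | ht
  · have hs : 0 < 1 - t := by linarith
    gcongr
  · have hs : 1 - t < 0 := by linarith
    exact div_le_div_of_nonpos_of_le hs.le
      (sub_le_sub_right (Real.rpow_le_rpow_of_nonpos hx hxy hs.le) 1)

lemma tlog_mul_le_add {t a b : ℝ} (ht : 1 ≤ t) (ha : 1 ≤ a) (hb : 1 ≤ b) :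
    tlog t (a * b) ≤ tlog t a + tlog t b := by
  unfold tlog
  split_ifs with ht1
  · exact (Real.log_mul (by positivity) (by positivity)).le
  have hs : 1 - t < 0 := by have := lt_of_le_of_ne ht (Ne.symm ht1); linarith
  rw [← add_div, Real.mul_rpow (by positivity) (by positivity)]
  apply div_le_div_of_nonpos_of_le hs.le
  have hu : a ^ (1 - t) ≤ 1 := Real.rpow_le_one_of_one_le_of_nonpos ha hs.le
  have hv : b ^ (1 - t) ≤ 1 := Real.rpow_le_one_of_one_le_of_nonpos hb hs.le
  nlinarith [mul_nonneg (sub_nonneg.2 hu) (sub_nonneg.2 hv)]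

section Ratios

variable {ι : Type*} [Fintype ι] [Nonempty ι] {p q r : ι → ℝ}

noncomputable def maxRatio (p q : ι → ℝ) : ℝ := univ.sup' univ_nonempty fun i => p i / q i

noncomputable def minRatio (p q : ι → ℝ) : ℝ := univ.inf' univ_nonempty fun i => p i / q i

omit [Fintype ι] [Nonempty ι] in
lemma ratio_mul_ratio (hq : ∀ i, q i ≠ 0) :
    ((fun i => p i / q i) * fun i => q i / r i) = fun i => p i / r i :=
  funext fun i => div_mul_div_cancel₀ (hq i)

lemma maxRatio_le_mul (hp : ∀ i, 0 ≤ p i) (hq : ∀ i, 0 < q i) (hr : ∀ i, 0 ≤ r i) :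
    maxRatio p r ≤ maxRatio p q * maxRatio q r := by
  unfold maxRatio
  rw [← ratio_mul_ratio (p := p) (r := r) fun i => (hq i).ne']
  exact sup'_mul_le_mul_sup'_of_nonneg (fun i _ => div_nonneg (hp i) (hq i).le)
    (fun i _ => div_nonneg (hq i).le (hr i)) _

lemma mul_minRatio_le (hp : ∀ i, 0 ≤ p i) (hq : ∀ i, 0 < q i) (hr : ∀ i, 0 ≤ r i) :
    minRatio p q * minRatio q r ≤ minRatio p r := by
  unfold minRatio
  rw [← ratio_mul_ratio (p := p) (r := r) fun i => (hq i).ne']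
  exact inf'_mul_le_mul_inf'_of_nonneg (fun i _ => div_nonneg (hp i) (hq i).le)
    (fun i _ => div_nonneg (hq i).le (hr i)) _

lemma minRatio_pos (hp : ∀ i, 0 < p i) (hq : ∀ i, 0 < q i) : 0 < minRatio p q :=
  (lt_inf'_iff _).2 fun i _ => div_pos (hp i) (hq i)

lemma minRatio_le_maxRatio (p q : ι → ℝ) : minRatio p q ≤ maxRatio p q :=
  let i := Classical.arbitrary ι
  (inf'_le _ (mem_univ i)).trans (le_sup' (fun i => p i / q i) (mem_univ i))

lemma one_le_maxRatio_div_minRatio (hp : ∀ i, 0 < p i) (hq : ∀ i, 0 < q i) :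
    1 ≤ maxRatio p q / minRatio p q :=
  (one_le_div (minRatio_pos hp hq)).2 (minRatio_le_maxRatio p q)

lemma maxRatio_div_minRatio_le_mul (hp : ∀ i, 0 < p i) (hq : ∀ i, 0 < q i)
    (hr : ∀ i, 0 < r i) :
    maxRatio p r / minRatio p r ≤
      maxRatio p q / minRatio p q * (maxRatio q r / minRatio q r) := by
  have hpq := minRatio_pos hp hq
  have hqr := minRatio_pos hq hr
  rw [div_mul_div_comm]
  exact div_le_div₀ (mul_nonneg (hpq.le.trans (minRatio_le_maxRatio p q))
    (hqr.le.trans (minRatio_le_maxRatio q r)))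
    (maxRatio_le_mul (fun i => (hp i).le) hq fun i => (hr i).le) (mul_pos hpq hqr)
    (mul_minRatio_le (fun i => (hp i).le) hq fun i => (hr i).le)

lemma tHilbert_eq_tlog (t : ℝ) (p q : ι → ℝ) :
    tHilbert t p q = tlog t (maxRatio p q / minRatio p q) :=
  rfl

end Ratios

theorem tHilbert_triangle_general {ι : Type*} [Fintype ι] [Nonempty ι] (t : ℝ)
    (ht1 : 1 ≤ t) (p q r : ι → ℝ)
    (hp : ∀ i, 0 < p i) (hq : ∀ i, 0 < q i) (hr : ∀ i, 0 < r i) :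
    tHilbert t p r ≤ tHilbert t p q + tHilbert t q r := by
  simp only [tHilbert_eq_tlog]
  calc tlog t (maxRatio p r / minRatio p r)
      ≤ tlog t (maxRatio p q / minRatio p q * (maxRatio q r / minRatio q r)) :=
        tlog_le_tlog t (one_pos.trans_le (one_le_maxRatio_div_minRatio hp hr))
          (maxRatio_div_minRatio_le_mul hp hq hr)
    _ ≤ tlog t (maxRatio p q / minRatio p q) + tlog t (maxRatio q r / minRatio q r) :=
        tlog_mul_le_add ht1 (one_le_maxRatio_div_minRatio hp hq)
          (one_le_maxRatio_div_minRatio hq hr)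

theorem tHilbert_triangle {ι : Type*} [Fintype ι] [Nonempty ι] (t : ℝ)
    (ht1 : 1 ≤ t) (ht2 : t < 2) (p q r : ι → ℝ)
    (hp : ∀ i, 0 < p i) (hq : ∀ i, 0 < q i) (hr : ∀ i, 0 < r i) :
    tHilbert t p r ≤ tHilbert t p q + tHilbert t q r :=
  tHilbert_triangle_general t ht1 p q r hp hq hr
end

section
/- For any t ∈ ℝ, the t-Hilbert co-simplex distance ρ(p,q) = log_t((max_i p_i/q_i)/(min_i p_i/q_i)) satisfies the t-triangle inequality: ρ(p, r) ≤ ρ(p, q) ⊕_t ρ(q, r), where a ⊕_t b = a + b + (1-t)ab. -/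
def tplus (t a b : ℝ) : ℝ := a + b + (1 - t) * a * b

lemma tlog_mono {t x y : ℝ} (hx : 0 < x) (hxy : x ≤ y) : tlog t x ≤ tlog t y := by
  unfold tlog
  split_ifs with h
  · exact Real.log_le_log hx hxy
  · rcases lt_trichotomy (1 - t) 0 with hs | hs | hs
    · have h2 := Real.rpow_le_rpow_of_nonpos hx hxy (le_of_lt hs)
      exact (div_le_div_right_of_neg hs).mpr (by linarith)
    · exact absurd (by linarith : t = 1) h
    · have h2 := Real.rpow_le_rpow (le_of_lt hx) hxy (le_of_lt hs)
      exact (div_le_div_iff_of_pos_right hs).mpr (by linarith)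

lemma tplus_tlog {t a b : ℝ} (ha : 0 < a) (hb : 0 < b) :
    tplus t (tlog t a) (tlog t b) = tlog t (a * b) := by
  unfold tplus tlog
  split_ifs with h
  · simp [Real.log_mul (ne_of_gt ha) (ne_of_gt hb), h]
  · have hs : (1 : ℝ) - t ≠ 0 := fun hh => h (by linarith)
    rw [Real.mul_rpow (le_of_lt ha) (le_of_lt hb)]
    field_simp
    ring

theorem tHilbert_t_triangle {ι : Type*} [Fintype ι] [Nonempty ι] (t : ℝ)
    (p q r : ι → ℝ)
    (hp : ∀ i, 0 < p i) (hq : ∀ i, 0 < q i) (hr : ∀ i, 0 < r i) :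
    tHilbert t p r ≤ tplus t (tHilbert t p q) (tHilbert t q r) := by
  classical
  set Mpq := Finset.univ.sup' Finset.univ_nonempty fun i => p i / q i with hMpq
  set mpq := Finset.univ.inf' Finset.univ_nonempty fun i => p i / q i with hmpq
  set Mqr := Finset.univ.sup' Finset.univ_nonempty fun i => q i / r i with hMqr
  set mqr := Finset.univ.inf' Finset.univ_nonempty fun i => q i / r i with hmqr
  set Mpr := Finset.univ.sup' Finset.univ_nonempty fun i => p i / r i with hMpr
  set mpr := Finset.univ.inf' Finset.univ_nonempty fun i => p i / r i with hmpr
  obtain ⟨j⟩ := ‹Nonempty ι›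
  have hmpq0 : 0 < mpq := by
    rw [hmpq, Finset.lt_inf'_iff]
    exact fun i _ => div_pos (hp i) (hq i)
  have hmqr0 : 0 < mqr := by
    rw [hmqr, Finset.lt_inf'_iff]
    exact fun i _ => div_pos (hq i) (hr i)
  have hmpr0 : 0 < mpr := by
    rw [hmpr, Finset.lt_inf'_iff]
    exact fun i _ => div_pos (hp i) (hr i)
  have hMpq0 : 0 < Mpq := by
    rw [hMpq]
    exact lt_of_lt_of_le (div_pos (hp j) (hq j)) (Finset.le_sup' (fun i => p i / q i) (Finset.mem_univ j))
  have hMqr0 : 0 < Mqr := by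
    rw [hMqr]
    exact lt_of_lt_of_le (div_pos (hq j) (hr j)) (Finset.le_sup' (fun i => q i / r i) (Finset.mem_univ j))
  have hMpr0 : 0 < Mpr := by
    rw [hMpr]
    exact lt_of_lt_of_le (div_pos (hp j) (hr j)) (Finset.le_sup' (fun i => p i / r i) (Finset.mem_univ j))
  have hsup : Mpr ≤ Mpq * Mqr := by
    rw [hMpr]
    apply Finset.sup'_le
    intro i _
    have heq : p i / r i = (p i / q i) * (q i / r i) := by
      rw [div_mul_div_comm, mul_comm (p i) (q i), mul_div_mul_left _ _ (ne_of_gt (hq i))]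
    rw [heq]
    exact mul_le_mul (Finset.le_sup' (fun i => p i / q i) (Finset.mem_univ i))
      (Finset.le_sup' (fun i => q i / r i) (Finset.mem_univ i))
      (le_of_lt (div_pos (hq i) (hr i))) (le_of_lt hMpq0)
  have hinf : mpq * mqr ≤ mpr := by
    rw [hmpr]
    apply Finset.le_inf'
    intro i _
    have heq : p i / r i = (p i / q i) * (q i / r i) := by
      rw [div_mul_div_comm, mul_comm (p i) (q i), mul_div_mul_left _ _ (ne_of_gt (hq i))]
    rw [heq]
    exact mul_le_mul (Finset.inf'_le (fun i => p i / q i) (Finset.mem_univ i))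
      (Finset.inf'_le (fun i => q i / r i) (Finset.mem_univ i)) (le_of_lt hmqr0)
      (le_of_lt (div_pos (hp i) (hq i)))
  have hratio : Mpr / mpr ≤ (Mpq / mpq) * (Mqr / mqr) := by
    calc Mpr / mpr ≤ (Mpq * Mqr) / (mpq * mqr) :=
          div_le_div₀ (mul_pos hMpq0 hMqr0).le hsup (mul_pos hmpq0 hmqr0) hinf
      _ = (Mpq / mpq) * (Mqr / mqr) := (div_mul_div_comm _ _ _ _).symm
  unfold tHilbert
  rw [← hMpq, ← hmpq, ← hMqr, ← hmqr, ← hMpr, ← hmpr,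
    tplus_tlog (div_pos hMpq0 hmpq0) (div_pos hMqr0 hmqr0)]
  exact tlog_mono (div_pos hMpr0 hmpr0) hratio
end
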